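/- arXiv:2503.00895 — 4 statements merged into one kernel-verified Lean document; each statement's English description precedes it below -/
import Mathlib

section
/- For any n×n real matrix A = (a_{ij}) and any 1 ≤ k ≤ n, the symmetry identity Σ_l σ_k^{il}(A) a_{jl} = Σ_l σ_k^{lj}(A) a_{li} holds for all indices i, j. -/
/-- `σ_k(A)`: the sum of the `k × k` principal minors of the matrix `A`. -/
noncomputable def sigmaMat (n k : ℕ) (A : Matrix (Fin n) (Fin n) ℝ) : ℝ :=
  ∑ s ∈ Finset.univ.powersetCard k,
    (A.submatrix (fun i : {x : Fin n // x ∈ s} => i.1) (fun j : {x : Fin n // x ∈ s} => j.1)).det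

/-- `σ_k^{ij}(A) = ∂σ_k(A)/∂a_{ij}`. -/
noncomputable def sigmaDeriv (n k : ℕ) (A : Matrix (Fin n) (Fin n) ℝ) (i j : Fin n) : ℝ :=
  deriv (fun t : ℝ => sigmaMat n k (A + t • Matrix.single i j 1)) 0

/-! The `k × k` principal minors of `A` sum to the `X^k`-coefficient of `det (1 + X • A)`.
Perturbing a single row, `det (M + c • E_pq) = det M + c * adj(M)_qp`, so `∂σ_k/∂a_pq` is the
`X^k`-coefficient of `X * adj(1 + X • A)_qp`. The adjugate of `1 + X • A` commutes with
`1 + X • A`, so `X • adj(1 + X • A)` commutes with `A`, and comparing `X^k`-coefficients of the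
two products gives the identity. -/

open Matrix Polynomial

namespace Matrix

variable {n R : Type*} [Fintype n]

theorem commute_map_coeff [Semiring R] {Q : Matrix n n R[X]} {B : Matrix n n R}
    (h : Commute Q (B.map C)) (k : ℕ) : Commute (Q.map (coeff · k)) B := by
  ext i j
  have hij := congrArg (fun P : Matrix n n R[X] => (P i j).coeff k) h.eq
  simpa only [mul_apply, map_apply, finsetSum_coeff, coeff_mul_C, coeff_C_mul] using hij

variable [DecidableEq n] [CommRing R]

theorem commute_adjugate_one_add (N : Matrix n n R) : Commute (adjugate (1 + N)) N := by
  have h : Commute (adjugate (1 + N)) (1 + N) := by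
    rw [Commute, SemiconjBy, adjugate_mul, mul_adjugate]
  have h' := h.sub_right (Commute.one_right _)
  rwa [add_sub_cancel_left] at h'

theorem det_add_smul_single (M : Matrix n n R) (p q : n) (c : R) :
    det (M + c • single p q 1) = det M + c * adjugate M q p := by
  have hrow : M + c • single p q 1 = M.updateRow p (M p + c • Pi.single q 1) := by
    ext a b
    by_cases hap : a = p
    · subst hap; simp [single_apply, Pi.single_apply, eq_comm]
    · simp [updateRow_ne hap, Ne.symm hap]
  rw [hrow, det_updateRow_add, updateRow_eq_self, det_updateRow_smul, adjugate_apply]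

end Matrix

theorem sigmaMat_eq_coeff_det (n k : ℕ) (A : Matrix (Fin n) (Fin n) ℝ) :
    sigmaMat n k A = (det (1 + (X : ℝ[X]) • A.map C)).coeff k :=
  (coeff_det_one_add_X_smul_eq_sum_minors A k).symm

theorem sigmaMat_add_smul_single (n k : ℕ) (A : Matrix (Fin n) (Fin n) ℝ) (p q : Fin n) (t : ℝ) :
    sigmaMat n k (A + t • single p q 1)
      = sigmaMat n k A + t * (X * adjugate (1 + (X : ℝ[X]) • A.map C) q p).coeff k := by
  have hsplit : 1 + (X : ℝ[X]) • (A + t • single p q 1).map C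
      = 1 + (X : ℝ[X]) • A.map C + (C t * X) • single p q 1 := by
    refine Matrix.ext fun a b => ?_
    simp only [Matrix.add_apply, Matrix.smul_apply, map_apply, single_apply, smul_eq_mul]
    split_ifs <;> simp only [map_add, map_mul, map_zero, map_one] <;> ring
  rw [sigmaMat_eq_coeff_det, sigmaMat_eq_coeff_det, hsplit, det_add_smul_single, coeff_add,
    mul_assoc, coeff_C_mul]

theorem sigmaDeriv_eq_coeff_adjugate (n k : ℕ) (A : Matrix (Fin n) (Fin n) ℝ) (p q : Fin n) :
    sigmaDeriv n k A p q = (X * adjugate (1 + (X : ℝ[X]) • A.map C) q p).coeff k := by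
  simp only [sigmaDeriv, sigmaMat_add_smul_single]
  simp

theorem commute_sigmaDeriv (n k : ℕ) (A : Matrix (Fin n) (Fin n) ℝ) :
    Commute (of fun p q => sigmaDeriv n k A q p) A := by
  have hcomm : Commute ((X : ℝ[X]) • adjugate (1 + (X : ℝ[X]) • A.map C)) (A.map C) := by
    have h := commute_adjugate_one_add ((X : ℝ[X]) • A.map C)
    rw [Commute, SemiconjBy, smul_mul_assoc, ← mul_smul_comm, h.eq, smul_mul_assoc, mul_smul_comm]
  have hcoeff : (of fun p q => sigmaDeriv n k A q p)
      = ((X : ℝ[X]) • adjugate (1 + (X : ℝ[X]) • A.map C)).map (coeff · k) := by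
    ext p q
    simp [sigmaDeriv_eq_coeff_adjugate]
  rw [hcoeff]
  exact commute_map_coeff hcomm k

theorem stmt2_general (n k : ℕ) (A : Matrix (Fin n) (Fin n) ℝ)
    (i j : Fin n) :
    ∑ l, sigmaDeriv n k A i l * A j l = ∑ l, sigmaDeriv n k A l j * A l i := by
  have h := congrArg (fun M => M j i) (commute_sigmaDeriv n k A).eq
  simp only [mul_apply, of_apply] at h
  simp_rw [mul_comm (sigmaDeriv n k A i _)]
  exact h.symm

/-- `∑_l σ_k^{il}(A) a_{jl} = ∑_l σ_k^{lj}(A) a_{li}`. -/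
theorem stmt2 (n k : ℕ) (hk : 1 ≤ k) (hkn : k ≤ n) (A : Matrix (Fin n) (Fin n) ℝ)
    (i j : Fin n) :
    ∑ l, sigmaDeriv n k A i l * A j l = ∑ l, sigmaDeriv n k A l j * A l i :=
  stmt2_general n k A i j
end

section
/- Let X = (X_1,…,X_n) be a C² vector field on an open set Ω ⊆ ℝⁿ, and let A(x) be the n×n matrix with entries a_{ij} = ∂_j X_i. Then for every 1 ≤ k ≤ n, the matrix (σ_k^{ij}(A)) is divergence-free in its second index: Σ_{j=1}^n ∂_j σ_k^{ij}(A(x)) = 0 for each i and each x ∈ Ω. -/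
open Matrix Finset

section DetDeriv

variable {𝕜 : Type*} [NontriviallyNormedField 𝕜] {E : Type*} [NormedAddCommGroup E]
  [NormedSpace 𝕜 E] {ι : Type*} [Fintype ι] [DecidableEq ι]

variable (𝕜 ι) in
noncomputable def detMultilinear : ContinuousMultilinearMap 𝕜 (fun _ : ι => ι → 𝕜) 𝕜 where
  toMultilinearMap := (detRowAlternating (n := ι) (R := 𝕜)).toMultilinearMap
  cont := continuous_id.matrix_det

theorem hasFDerivAt_det {M : E → Matrix ι ι 𝕜} {L : ι → ι → E →L[𝕜] 𝕜} {x : E}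
    (hM : ∀ p q, HasFDerivAt (fun y => M y p q) (L p q) x) :
    HasFDerivAt (fun y => (M y).det)
      (∑ p, (detMultilinear 𝕜 ι).toContinuousLinearMap (M x) p ∘L ContinuousLinearMap.pi (L p))
      x :=
  HasFDerivAt.multilinear_comp (detMultilinear 𝕜 ι) fun p => hasFDerivAt_pi.2 (hM p)

theorem differentiableAt_det {M : E → Matrix ι ι 𝕜} {x : E}
    (hM : ∀ p q, DifferentiableAt 𝕜 (fun y => M y p q) x) :
    DifferentiableAt 𝕜 (fun y => (M y).det) x :=
  (hasFDerivAt_det fun p q => (hM p q).hasFDerivAt).differentiableAt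

theorem fderiv_det_apply {M : E → Matrix ι ι 𝕜} {x : E}
    (hM : ∀ p q, DifferentiableAt 𝕜 (fun y => M y p q) x) (v : E) :
    fderiv 𝕜 (fun y => (M y).det) x v =
      ∑ p, ((M x).updateRow p fun q => fderiv 𝕜 (fun y => M y p q) x v).det := by
  rw [(hasFDerivAt_det fun p q => (hM p q).hasFDerivAt).fderiv, _root_.sum_apply]
  rfl

theorem fderiv_det_updateRow_apply {M : E → Matrix ι ι 𝕜} {x : E}
    (hM : ∀ p q, DifferentiableAt 𝕜 (fun y => M y p q) x) (a : ι) (w : ι → 𝕜) (v : E) :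
    fderiv 𝕜 (fun y => ((M y).updateRow a w).det) x v =
      ∑ p ∈ univ.erase a,
        (((M x).updateRow a w).updateRow p fun q => fderiv 𝕜 (fun y => M y p q) x v).det := by
  have hM' : ∀ p q, DifferentiableAt 𝕜 (fun y => (M y).updateRow a w p q) x := by
    intro p q
    simp only [updateRow_apply]
    split_ifs
    exacts [differentiableAt_const _, hM p q]
  rw [fderiv_det_apply hM', ← add_sum_erase _ _ (mem_univ a),
    det_eq_zero_of_row_eq_zero a (by simp), zero_add]
  refine sum_congr rfl fun p hp => ?_
  simp [updateRow_apply, ne_of_mem_erase hp]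

end DetDeriv

section Cancellation

variable {R : Type*} [CommRing R] {ι κ : Type*}

theorem sum_sum_mul_eq_zero_of_symm_of_antisymm [Fintype κ] [IsAddTorsionFree R]
    {S T : κ → κ → R} (hS : ∀ a b, S a b = S b a) (hT : ∀ a b, T a b = -T b a) :
    ∑ a, ∑ b, S a b * T a b = 0 := by
  refine self_eq_neg.mp ?_
  nth_rw 1 [sum_comm]
  rw [← sum_neg_distrib]
  refine sum_congr rfl fun a _ => ?_
  rw [← sum_neg_distrib]
  exact sum_congr rfl fun b _ => by rw [hS b a, hT b a, mul_neg]

variable [Fintype ι] [DecidableEq ι]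

theorem det_updateRow_sum_smul (N : Matrix ι ι R) (p : ι) (t : Finset κ) (c : κ → R)
    (w : κ → ι → R) :
    (N.updateRow p (∑ m ∈ t, c m • w m)).det = ∑ m ∈ t, c m * (N.updateRow p (w m)).det := by
  simp_rw [← det_updateRow_smul]
  exact detRowAlternating.map_update_sum t p _ N

theorem det_updateRow_updateRow_swap (N : Matrix ι ι R) {r p : ι} (hrp : r ≠ p) (a b : ι → R) :
    ((N.updateRow r a).updateRow p b).det = -((N.updateRow r b).updateRow p a).det := by
  have hswap : (N.updateRow r a).updateRow p b =
      ((N.updateRow r b).updateRow p a).submatrix (Equiv.swap r p) id := by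
    ext q l
    rcases eq_or_ne q r with rfl | hqr
    · simp [updateRow_apply, hrp]
    rcases eq_or_ne q p with rfl | hqp
    · simp [updateRow_apply, hrp]
    simp [updateRow_apply, hqr, hqp, Equiv.swap_apply_of_ne_of_ne hqr hqp]
  rw [hswap, det_permute, Equiv.Perm.sign_swap hrp]
  simp

variable [Fintype κ] [DecidableEq κ] [IsAddTorsionFree R]

theorem sum_det_updateRow_updateRow_eq_zero (N : Matrix ι ι R) {r p : ι} (hrp : r ≠ p)
    (f : ι → κ) {H : κ → κ → R} (hH : ∀ a b, H a b = H b a) :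
    ∑ j, ((N.updateRow r (Pi.single j 1 ∘ f)).updateRow p fun q => H j (f q)).det = 0 := by
  have hrow : ∀ j, (fun q => H j (f q)) = ∑ m, H j m • (Pi.single m 1 ∘ f) := by
    intro j
    funext q
    simp [Finset.sum_apply, Pi.single_apply]
  simp_rw [hrow, det_updateRow_sum_smul]
  exact sum_sum_mul_eq_zero_of_symm_of_antisymm hH
    fun a b => det_updateRow_updateRow_swap _ hrp _ _

end Cancellation

section PrincipalMinors

variable {𝕜 : Type*} [NontriviallyNormedField 𝕜] {ι : Type*} [DecidableEq ι]

theorem submatrix_updateRow_of_injective {l m o p α : Type*} [DecidableEq l] [DecidableEq m]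
    (A : Matrix m p α) {f : l → m} (hf : Function.Injective f) (g : o → p) {a : l} {i : m}
    (hi : f a = i) (v : p → α) :
    (A.updateRow i v).submatrix f g = (A.submatrix f g).updateRow a (v ∘ g) := by
  subst hi
  ext q c
  simp [updateRow_apply, hf.eq_iff]

theorem add_smul_single_eq_updateRow (A : Matrix ι ι 𝕜) (i j : ι) (t : 𝕜) :
    A + t • single i j 1 = A.updateRow i (A i + t • Pi.single j 1) := by
  ext p q
  rcases eq_or_ne p i with rfl | hp
  · simp [single_apply, Pi.single_apply, eq_comm]
  · simp [updateRow_apply, hp, Ne.symm hp]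

theorem hasDerivAt_det_submatrix_add_smul_single (A : Matrix ι ι 𝕜) (s : Finset ι) (i j : ι) :
    HasDerivAt (fun t : 𝕜 => ((A + t • single i j 1).submatrix (↑) (↑) : Matrix s s 𝕜).det)
      (if i ∈ s then ((A.updateRow i (Pi.single j 1)).submatrix (↑) (↑) : Matrix s s 𝕜).det
        else 0) 0 := by
  simp_rw [add_smul_single_eq_updateRow]
  split_ifs with hi
  · simp_rw [submatrix_updateRow_of_injective _ Subtype.val_injective _ (a := ⟨i, hi⟩) rfl]
    have hrow : ∀ t : 𝕜, (A i + t • Pi.single j 1) ∘ ((↑) : s → ι) =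
        (A.submatrix (↑) (↑) : Matrix s s 𝕜) ⟨i, hi⟩ + t • (Pi.single j 1 ∘ (↑)) := fun _ => rfl
    simp_rw [hrow, det_updateRow_add, det_updateRow_smul, updateRow_eq_self]
    simpa using ((hasDerivAt_id (0 : 𝕜)).mul_const
      ((A.submatrix (↑) (↑) : Matrix s s 𝕜).updateRow ⟨i, hi⟩ (Pi.single j 1 ∘ (↑))).det).const_add
      (A.submatrix (↑) (↑) : Matrix s s 𝕜).det
  · have hsub : ∀ v, ((A.updateRow i v).submatrix (↑) (↑) : Matrix s s 𝕜) =
        A.submatrix (↑) (↑) := by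
      intro v
      ext p q
      simp [updateRow_apply, ne_of_mem_of_not_mem p.2 hi]
    simp_rw [hsub]
    exact hasDerivAt_const _ _

theorem sum_fderiv_det_submatrix_updateRow_eq_zero [Fintype ι] [IsAddTorsionFree 𝕜]
    {A : (ι → 𝕜) → Matrix ι ι 𝕜} {x : ι → 𝕜}
    (hA : ∀ p q, DifferentiableAt 𝕜 (fun y => A y p q) x)
    (hcurl : ∀ p q j, fderiv 𝕜 (fun y => A y p q) x (Pi.single j 1) =
      fderiv 𝕜 (fun y => A y p j) x (Pi.single q 1))
    {s : Finset ι} {i : ι} (hi : i ∈ s) :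
    ∑ j, fderiv 𝕜 (fun y => (((A y).updateRow i (Pi.single j 1)).submatrix (↑) (↑) :
      Matrix s s 𝕜).det) x (Pi.single j 1) = 0 := by
  have hAs : ∀ p q : s, DifferentiableAt 𝕜 (fun y => (A y).submatrix (↑) (↑) p q) x :=
    fun p q => hA p q
  simp_rw [submatrix_updateRow_of_injective _ Subtype.val_injective _ (a := ⟨i, hi⟩) rfl,
    fderiv_det_updateRow_apply hAs]
  rw [sum_comm]
  exact sum_eq_zero fun p hp => sum_det_updateRow_updateRow_eq_zero _ (ne_of_mem_erase hp).symm
    _ fun a b => hcurl p b a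

end PrincipalMinors

section Sigma

variable {n : ℕ}

theorem sigmaDeriv_eq_sum (k : ℕ) (A : Matrix (Fin n) (Fin n) ℝ) (i j : Fin n) :
    sigmaDeriv n k A i j = ∑ s ∈ univ.powersetCard k with i ∈ s,
      ((A.updateRow i (Pi.single j 1)).submatrix (↑) (↑) : Matrix s s ℝ).det := by
  rw [sum_filter]
  exact (HasDerivAt.fun_sum fun s _ => hasDerivAt_det_submatrix_add_smul_single A s i j).deriv

theorem sum_fderiv_sigmaDeriv_eq_zero {A : (Fin n → ℝ) → Matrix (Fin n) (Fin n) ℝ}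
    {x : Fin n → ℝ} (hA : ∀ p q, DifferentiableAt ℝ (fun y => A y p q) x)
    (hcurl : ∀ p q j, fderiv ℝ (fun y => A y p q) x (Pi.single j 1) =
      fderiv ℝ (fun y => A y p j) x (Pi.single q 1))
    (k : ℕ) (i : Fin n) :
    ∑ j, fderiv ℝ (fun y => sigmaDeriv n k (A y) i j) x (Pi.single j 1) = 0 := by
  have hdiff : ∀ (j : Fin n) (s : Finset (Fin n)), DifferentiableAt ℝ
      (fun y => (((A y).updateRow i (Pi.single j 1)).submatrix (↑) (↑) : Matrix s s ℝ).det) x := by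
    refine fun j s => differentiableAt_det fun p q => ?_
    simp only [submatrix_apply, updateRow_apply]
    split_ifs
    exacts [differentiableAt_const _, hA _ _]
  simp_rw [sigmaDeriv_eq_sum, fderiv_fun_sum fun s _ => hdiff _ s, _root_.sum_apply]
  rw [sum_comm]
  exact sum_eq_zero fun s hs =>
    sum_fderiv_det_submatrix_updateRow_eq_zero hA hcurl (mem_filter.1 hs).2

end Sigma

theorem stmt3_general (n k : ℕ)
    (Ω : Set (Fin n → ℝ)) (hΩ : IsOpen Ω)
    (X : (Fin n → ℝ) → (Fin n → ℝ)) (hX : ContDiffOn ℝ 2 X Ω)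
    (A : (Fin n → ℝ) → Matrix (Fin n) (Fin n) ℝ)
    (hA : ∀ x i j, A x i j = fderiv ℝ X x (Pi.single j 1) i)
    (x : Fin n → ℝ) (hx : x ∈ Ω) (i : Fin n) :
    ∑ j, fderiv ℝ (fun y => sigmaDeriv n k (A y) i j) x (Pi.single j 1) = 0 := by
  have hXx : ContDiffAt ℝ 2 X x := hX.contDiffAt (hΩ.mem_nhds hx)
  have hDX : DifferentiableAt ℝ (fderiv ℝ X) x :=
    (hXx.fderiv_right (m := 1) le_rfl).differentiableAt one_ne_zero
  have hsymm : IsSymmSndFDerivAt ℝ X x :=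
    hXx.isSymmSndFDerivAt (by simp [minSmoothness_of_isRCLikeNormedField])
  have hentry : ∀ p q, HasFDerivAt (fun y => A y p q)
      ((ContinuousLinearMap.proj p).comp (ContinuousLinearMap.apply ℝ (Fin n → ℝ) (Pi.single q 1))
        ∘L fderiv ℝ (fderiv ℝ X) x) x := by
    intro p q
    simp_rw [hA]
    exact ((ContinuousLinearMap.proj p).comp
      (ContinuousLinearMap.apply ℝ (Fin n → ℝ) (Pi.single q 1))).hasFDerivAt.comp x hDX.hasFDerivAt
  refine sum_fderiv_sigmaDeriv_eq_zero (fun p q => (hentry p q).differentiableAt)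
    (fun p q j => ?_) k i
  simp only [(hentry _ _).fderiv, ContinuousLinearMap.comp_apply]
  exact congrFun (hsymm _ _) p

/-- if `a_{ij} = ∂_j X_i` for a `C²` vector field `X` on an open set `Ω`,
then `∑_j ∂_j σ_k^{ij}(A(x)) = 0` on `Ω`. -/
theorem stmt3 (n k : ℕ) (hk : 1 ≤ k) (hkn : k ≤ n)
    (Ω : Set (Fin n → ℝ)) (hΩ : IsOpen Ω)
    (X : (Fin n → ℝ) → (Fin n → ℝ)) (hX : ContDiffOn ℝ 2 X Ω)
    (A : (Fin n → ℝ) → Matrix (Fin n) (Fin n) ℝ)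
    (hA : ∀ x i j, A x i j = fderiv ℝ X x (Pi.single j 1) i)
    (x : Fin n → ℝ) (hx : x ∈ Ω) (i : Fin n) :
    ∑ j, fderiv ℝ (fun y => sigmaDeriv n k (A y) i j) x (Pi.single j 1) = 0 :=
  stmt3_general n k Ω hΩ X hX A hA x hx i
end

section
/- Let λ ∈ Γ_k = {λ ∈ ℝⁿ : σ_l(λ) ≥ 0 for l = 1,…,k} and let D = diag(λ₁,…,λₙ). Then the matrix (∂σ_k/∂a_{ij})(D), i.e., the matrix of partial derivatives of σ_k evaluated at the diagonal matrix D, is positive semidefinite (it is the diagonal matrix with entries σ_{k−1}(λ | i), the (k−1)-th elementary symmetric polynomial of λ with λ_i omitted, and each such entry is nonnegative). -/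
/-!
At `D = diag λ` the matrix `D + t E_ij` is triangular, so `σ_k(D + t E_ij)` is `σ_k` of its
diagonal: it does not depend on `t` when `i ≠ j`, and equals `σ_k(λ|i) + (λ_i + t) σ_{k-1}(λ|i)`
when `i = j`. Hence the derivative matrix is `diag (σ_{k-1}(λ|i))`.

Nonnegativity of `σ_r(λ|i)` goes by induction on `r < k`: if `σ_{r-1}(λ|i) ≥ 0 > σ_r(λ|i)`, then
`σ_r(λ) ≥ 0` and `σ_{r+1}(λ) ≥ 0` force `λ_i > 0` and `σ_{r-1}(λ|i) σ_{r+1}(λ|i) ≥ σ_r(λ|i)²`,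
against the strict Newton inequality. Newton's inequality `E_j E_{j+2} ≤ E_{j+1}²` for the means
`E_l = σ_l / C(m, l)` of `m` reals is proved via Rolle's theorem: the roots of `p'`, where
`p = ∏ (X - λ_i)`, have the same `E_0, …, E_{m-1}`. This reduces to `m = j + 2`, where passing to
the reciprocals `λ_i⁻¹` reduces to `j = 0`, a form of Cauchy–Schwarz.
-/

open Polynomial Matrix

namespace Multiset

section CommSemiring

variable {R : Type*} [CommSemiring R]

@[simp]
lemma esymm_zero (s : Multiset R) : s.esymm 0 = 1 := by
  simp [esymm, powersetCard_zero_left]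

lemma esymm_eq_zero_of_card_lt {s : Multiset R} {k : ℕ} (h : card s < k) : s.esymm k = 0 := by
  simp [esymm, powersetCard_eq_empty k h]

@[simp]
lemma esymm_empty_succ (k : ℕ) : (0 : Multiset R).esymm (k + 1) = 0 :=
  esymm_eq_zero_of_card_lt (by simp)

lemma esymm_cons_succ (a : R) (s : Multiset R) (k : ℕ) :
    (a ::ₘ s).esymm (k + 1) = s.esymm (k + 1) + a * s.esymm k := by
  simp [esymm, powersetCard_cons, map_map, sum_map_mul_left]

lemma esymm_card (s : Multiset R) : s.esymm (card s) = s.prod := by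
  induction s using Multiset.induction with
  | empty => simp
  | cons a s ih => simp [esymm_cons_succ, ih, esymm_eq_zero_of_card_lt]

end CommSemiring

lemma esymm_map_inv_mul_prod {K : Type*} [Field K] {s : Multiset K} (hs : (0 : K) ∉ s)
    {l r : ℕ} (hlr : l + r = card s) : (s.map (·⁻¹)).esymm l * s.prod = s.esymm r := by
  induction s using Multiset.induction generalizing l r with
  | empty =>
    obtain ⟨rfl, rfl⟩ : l = 0 ∧ r = 0 := by simp at hlr; omega
    simp
  | cons a s ih =>
    have ha : a⁻¹ * a = 1 := inv_mul_cancel₀ fun h => hs (h ▸ mem_cons_self a s)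
    have hs : (0 : K) ∉ s := fun h => hs (mem_cons_of_mem h)
    rw [card_cons] at hlr
    rcases l with _ | l
    · obtain rfl : r = card s + 1 := by omega
      rw [esymm_zero, one_mul, ← card_cons, esymm_card]
    rw [map_cons, esymm_cons_succ, prod_cons]
    rcases r with _ | r
    · have h := ih hs (l := l) (r := 0) (by omega)
      rw [esymm_zero] at h
      rw [esymm_eq_zero_of_card_lt (by simp; omega), esymm_zero]
      linear_combination h + (s.map (·⁻¹)).esymm l * s.prod * ha
    · rw [esymm_cons_succ, ← ih hs (l := l + 1) (r := r) (by omega),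
        ← ih hs (l := l) (r := r + 1) (by omega)]
      linear_combination (s.map (·⁻¹)).esymm l * s.prod * ha

lemma two_mul_card_mul_esymm_two_le {K : Type*} [Field K] [LinearOrder K]
    [IsStrictOrderedRing K] (s : Multiset K) :
    2 * card s * s.esymm 2 ≤ (card s - 1) * s.esymm 1 ^ 2 := by
  induction s using Multiset.induction with
  | empty => simp
  | cons a s ih =>
    rw [esymm_cons_succ, esymm_cons_succ, esymm_zero, card_cons]
    push_cast
    rcases (card s).eq_zero_or_pos with hs | hs
    · simp [card_eq_zero.1 hs]
    have hc : (0 : K) < card s := by exact_mod_cast hs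
    refine le_of_mul_le_mul_left ?_ hc
    nlinarith [sq_nonneg (s.esymm 1 - card s * a)]

-- For `k > card s` this is `0 / 0 = 0`, so Newton's inequality below needs no size hypothesis.
noncomputable def esymmMean (s : Multiset ℝ) (k : ℕ) : ℝ :=
  s.esymm k / (card s).choose k

lemma esymmMean_zero (s : Multiset ℝ) : s.esymmMean 0 = 1 := by
  simp [esymmMean]

lemma esymmMean_eq_zero_of_card_lt {s : Multiset ℝ} {k : ℕ} (h : card s < k) :
    s.esymmMean k = 0 := by
  simp [esymmMean, esymm_eq_zero_of_card_lt h]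

lemma esymmMean_zero_mul_esymmMean_two_le_sq (s : Multiset ℝ) :
    s.esymmMean 0 * s.esymmMean 2 ≤ s.esymmMean 1 ^ 2 := by
  rw [esymmMean_zero, one_mul, esymmMean, esymmMean, Nat.choose_one_right, Nat.cast_choose_two]
  rcases lt_or_ge (card s) 2 with hs | hs
  · rw [esymm_eq_zero_of_card_lt hs, zero_div]
    positivity
  have hm : (2 : ℝ) ≤ card s := by exact_mod_cast hs
  rw [div_pow, div_le_div_iff₀ (by nlinarith) (by positivity)]
  nlinarith [two_mul_card_mul_esymm_two_le s, sq_nonneg (s.esymm 1)]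

lemma esymmMean_eq_prod_mul_esymmMean_map_inv {s : Multiset ℝ} (hs : (0 : ℝ) ∉ s) {l r : ℕ}
    (hlr : l + r = card s) : s.esymmMean r = s.prod * (s.map (·⁻¹)).esymmMean l := by
  rw [esymmMean, esymmMean, card_map, ← hlr, Nat.choose_symm_add,
    ← esymm_map_inv_mul_prod hs hlr]
  ring

lemma esymmMean_mul_esymmMean_le_sq_of_card_eq {s : Multiset ℝ} {j : ℕ} (hs : card s = j + 2) :
    s.esymmMean j * s.esymmMean (j + 2) ≤ s.esymmMean (j + 1) ^ 2 := by
  by_cases h0 : (0 : ℝ) ∈ s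
  · have h : s.esymmMean (j + 2) = 0 := by
      rw [esymmMean, ← hs, esymm_card, prod_eq_zero h0, zero_div]
    rw [h, mul_zero]
    positivity
  set r := s.map (·⁻¹)
  rw [esymmMean_eq_prod_mul_esymmMean_map_inv h0 (l := 2) (r := j) (by omega),
    esymmMean_eq_prod_mul_esymmMean_map_inv h0 (l := 1) (r := j + 1) (by omega),
    esymmMean_eq_prod_mul_esymmMean_map_inv h0 (l := 0) (r := j + 2) (by omega)]
  calc s.prod * r.esymmMean 2 * (s.prod * r.esymmMean 0)
      = s.prod ^ 2 * (r.esymmMean 0 * r.esymmMean 2) := by ring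
    _ ≤ s.prod ^ 2 * r.esymmMean 1 ^ 2 := by
      gcongr
      exact esymmMean_zero_mul_esymmMean_two_le_sq r
    _ = (s.prod * r.esymmMean 1) ^ 2 := by ring

theorem exists_card_eq_succ_mul_esymm_eq (s : Multiset ℝ) {m : ℕ} (hs : card s = m + 1) :
    ∃ μ : Multiset ℝ, card μ = m ∧
      ∀ l ≤ m, (m + 1 : ℝ) * μ.esymm l = (m + 1 - l : ℝ) * s.esymm l := by
  set p : ℝ[X] := (s.map fun a => X - C a).prod
  have hp_monic : p.Monic := monic_multiset_prod_of_monic _ _ fun a _ => monic_X_sub_C a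
  have hp_deg : p.natDegree = m + 1 := by rw [natDegree_multiset_prod_X_sub_C_eq_card, hs]
  have hp_roots : p.roots = s := roots_multiset_prod_X_sub_C s
  have hp'_deg : (derivative p).natDegree = m := by rw [natDegree_derivative, hp_deg]; rfl
  have hp'_lc : (derivative p).leadingCoeff = m + 1 := by
    rw [leadingCoeff_derivative, hp_monic.leadingCoeff, hp_deg]
    push_cast
    ring
  -- Rolle: all roots of `p'` are real
  have hcard : card (derivative p).roots = m := by
    have := card_roots_le_derivative p
    have := card_roots' (derivative p)
    rw [hp_roots] at *
    omega
  refine ⟨(derivative p).roots, hcard, fun l hl => ?_⟩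
  have h' := coeff_eq_esymm_roots_of_card (hcard.trans hp'_deg.symm) (k := m - l) (by omega)
  have h := coeff_eq_esymm_roots_of_card (p := p) (by rw [hp_roots, hs, hp_deg])
    (k := m - l + 1) (by omega)
  rw [coeff_derivative, h, hp'_lc, hp_monic.leadingCoeff, hp'_deg, hp_deg, hp_roots,
    show m - (m - l) = l by omega, show m + 1 - (m - l + 1) = l by omega,
    Nat.cast_sub hl] at h'
  refine mul_left_cancel₀ (pow_ne_zero l (neg_ne_zero.2 one_ne_zero)) ?_
  linear_combination h'.symm

theorem exists_card_eq_esymmMean_eq (s : Multiset ℝ) {m : ℕ} (hs : card s = m + 1) :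
    ∃ μ : Multiset ℝ, card μ = m ∧ ∀ l ≤ m, μ.esymmMean l = s.esymmMean l := by
  obtain ⟨μ, hμ, h⟩ := exists_card_eq_succ_mul_esymm_eq s hs
  refine ⟨μ, hμ, fun l hl => ?_⟩
  have hchoose : (m.choose l : ℝ) * (m + 1) = (m + 1).choose l * (m + 1 - l) := by
    have h := congrArg (Nat.cast : ℕ → ℝ) (Nat.choose_mul_succ_eq m l)
    push_cast [Nat.cast_sub (show l ≤ m + 1 by omega)] at h
    exact h
  have hpos : (0 : ℝ) < m.choose l := by exact_mod_cast Nat.choose_pos hl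
  have hpos' : (0 : ℝ) < (m + 1).choose l := by exact_mod_cast Nat.choose_pos (by omega)
  have hl' : (0 : ℝ) < m + 1 - l := by
    have : (l : ℝ) ≤ m := by exact_mod_cast hl
    linarith
  rw [esymmMean, esymmMean, hμ, hs, div_eq_div_iff hpos.ne' hpos'.ne']
  refine mul_left_cancel₀ hl'.ne' ?_
  linear_combination (m.choose l : ℝ) * h l hl - μ.esymm l * hchoose

theorem esymmMean_mul_esymmMean_le_sq (s : Multiset ℝ) (j : ℕ) :
    s.esymmMean j * s.esymmMean (j + 2) ≤ s.esymmMean (j + 1) ^ 2 := by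
  induction hm : card s generalizing s with
  | zero =>
    rw [esymmMean_eq_zero_of_card_lt (k := j + 2) (by omega), mul_zero]
    positivity
  | succ m ih =>
    rcases lt_trichotomy (m + 1) (j + 2) with hlt | heq | hgt
    · rw [esymmMean_eq_zero_of_card_lt (k := j + 2) (by omega), mul_zero]
      positivity
    · exact esymmMean_mul_esymmMean_le_sq_of_card_eq (hm.trans heq)
    · obtain ⟨μ, hμ, h⟩ := exists_card_eq_esymmMean_eq s hm
      rw [← h j (by omega), ← h (j + 1) (by omega), ← h (j + 2) (by omega)]
      exact ih μ hμ

theorem _root_.Nat.choose_mul_choose_add_two_lt_sq {m j : ℕ} (h : j + 2 ≤ m) :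
    m.choose j * m.choose (j + 2) < m.choose (j + 1) ^ 2 := by
  obtain ⟨d, rfl⟩ : ∃ d, m = j + 2 + d := ⟨m - (j + 2), by omega⟩
  have h1 := Nat.choose_succ_right_eq (j + 2 + d) j
  have h2 := Nat.choose_succ_right_eq (j + 2 + d) (j + 1)
  rw [show j + 2 + d - j = d + 2 by omega] at h1
  rw [show j + 2 + d - (j + 1) = d + 1 by omega, show j + 1 + 1 = j + 2 from rfl] at h2
  have hpos : 0 < (j + 2 + d).choose (j + 1) := Nat.choose_pos (by omega)
  have key := congrArg₂ (· * ·) h1.symm h2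
  refine Nat.lt_of_mul_lt_mul_right (a := (d + 2) * (j + 2)) ?_
  nlinarith [mul_pos (pow_pos hpos 2) (show 0 < d + j + 3 by omega)]

theorem esymm_mul_esymm_lt_sq {s : Multiset ℝ} {j : ℕ} (h : s.esymm (j + 1) ≠ 0) :
    s.esymm j * s.esymm (j + 2) < s.esymm (j + 1) ^ 2 := by
  have hsq : 0 < s.esymm (j + 1) ^ 2 := by positivity
  rcases lt_or_ge (card s) (j + 2) with hs | hs
  · rw [esymm_eq_zero_of_card_lt hs, mul_zero]
    exact hsq
  have newton := esymmMean_mul_esymmMean_le_sq s j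
  have hlc : ((card s).choose j * (card s).choose (j + 2) : ℝ) < (card s).choose (j + 1) ^ 2 := by
    exact_mod_cast Nat.choose_mul_choose_add_two_lt_sq hs
  have ha : (0 : ℝ) < (card s).choose j := by exact_mod_cast Nat.choose_pos (by omega)
  have hb : (0 : ℝ) < (card s).choose (j + 1) := by exact_mod_cast Nat.choose_pos (by omega)
  have hc : (0 : ℝ) < (card s).choose (j + 2) := by exact_mod_cast Nat.choose_pos hs
  rw [esymmMean, esymmMean, esymmMean, div_mul_div_comm, div_pow,
    div_le_div_iff₀ (by positivity) (by positivity)] at newton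
  nlinarith [mul_lt_mul_of_pos_left hlc hsq]

theorem esymm_nonneg_of_esymm_cons_nonneg {a : ℝ} {s : Multiset ℝ} {k : ℕ}
    (h : ∀ l ≤ k + 1, 0 ≤ (a ::ₘ s).esymm l) : 0 ≤ s.esymm k := by
  induction k with
  | zero => simp
  | succ k ih =>
    have h0 : 0 ≤ s.esymm k := ih fun l hl => h l (by omega)
    have h1 := h (k + 1) (by omega)
    have h2 := h (k + 2) (by omega)
    rw [esymm_cons_succ] at h1 h2
    by_contra! hneg
    nlinarith [esymm_mul_esymm_lt_sq hneg.ne, mul_nonneg h0 h2,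
      mul_nonneg h1 (neg_nonneg.2 hneg.le)]

end Multiset

lemma Finset.map_univ_val_eq_cons {ι α : Type*} [Fintype ι] [DecidableEq ι] (f : ι → α)
    (i : ι) : Finset.univ.val.map f = f i ::ₘ (Finset.univ.erase i).val.map f := by
  rw [Finset.erase_val, ← Multiset.map_cons, Multiset.cons_erase (Finset.mem_univ_val i)]

lemma Matrix.isUpperTriangular_or_isLowerTriangular_diagonal_add_smul_single {m R : Type*}
    [LinearOrder m] [Semiring R] (d : m → R) (t : R) (i j : m) :
    (diagonal d + t • single i j 1).IsUpperTriangular ∨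
      (diagonal d + t • single i j 1).IsLowerTriangular := by
  rw [smul_single]
  rcases le_total i j with h | h
  · exact .inl ((blockTriangular_diagonal d).add (blockTriangular_single h _))
  · exact .inr ((blockTriangular_diagonal d).add (blockTriangular_single' h _))

section Sigma

variable {n : ℕ}

lemma sigmaMat_eq_esymm_of_triangular {k : ℕ} {M : Matrix (Fin n) (Fin n) ℝ}
    (hM : M.IsUpperTriangular ∨ M.IsLowerTriangular) :
    sigmaMat n k M = (Finset.univ.val.map fun i => M i i).esymm k := by
  rw [sigmaMat, Finset.esymm_map_val]
  refine Finset.sum_congr rfl fun s _ => ?_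
  rw [← Finset.prod_coe_sort s]
  rcases hM with hM | hM
  · exact det_of_isUpperTriangular fun a b hab => hM hab
  · exact det_of_isLowerTriangular _ fun a b hab => hM hab

lemma sigmaMat_diagonal {k : ℕ} (lam : Fin n → ℝ) :
    sigmaMat n k (diagonal lam) = (Finset.univ.val.map lam).esymm k := by
  simp [sigmaMat_eq_esymm_of_triangular (.inl (blockTriangular_diagonal lam))]

lemma sigmaDeriv_diagonal_of_ne {k : ℕ} (lam : Fin n → ℝ) {i j : Fin n} (hij : i ≠ j) :
    sigmaDeriv n k (diagonal lam) i j = 0 := by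
  have hconst : (fun t : ℝ => sigmaMat n k (diagonal lam + t • single i j 1)) =
      fun _ => sigmaMat n k (diagonal lam) := by
    funext t
    rw [sigmaMat_eq_esymm_of_triangular
      (isUpperTriangular_or_isLowerTriangular_diagonal_add_smul_single lam t i j),
      sigmaMat_diagonal]
    congr 2
    funext a
    have : ¬(i = a ∧ j = a) := fun h => hij (h.1.trans h.2.symm)
    simp [this]
  rw [sigmaDeriv, hconst, deriv_const]

lemma sigmaDeriv_diagonal_self {k : ℕ} (lam : Fin n → ℝ) (i : Fin n) :
    sigmaDeriv n (k + 1) (diagonal lam) i i = ((Finset.univ.erase i).val.map lam).esymm k := by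
  set E := fun l => ((Finset.univ.erase i).val.map lam).esymm l
  have hlin : (fun t : ℝ => sigmaMat n (k + 1) (diagonal lam + t • single i i 1)) =
      fun t => E (k + 1) + (lam i + t) * E k := by
    funext t
    rw [sigmaMat_eq_esymm_of_triangular
      (isUpperTriangular_or_isLowerTriangular_diagonal_add_smul_single lam t i i),
      Finset.map_univ_val_eq_cons _ i, Multiset.esymm_cons_succ]
    have hrest : (Finset.univ.erase i).val.map
        (fun a => (diagonal lam + t • single i i 1 : Matrix (Fin n) (Fin n) ℝ) a a) =
        (Finset.univ.erase i).val.map lam :=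
      Multiset.map_congr rfl fun a ha => by
        have hai : i ≠ a := (Finset.ne_of_mem_erase (Finset.mem_def.2 ha)).symm
        simp [hai]
    rw [hrest]
    simp [E]
  have hderiv : HasDerivAt (fun t : ℝ => E (k + 1) + (lam i + t) * E k) (E k) 0 := by
    simpa using (((hasDerivAt_id (0 : ℝ)).const_add (lam i)).mul_const (E k)).const_add (E (k + 1))
  rw [sigmaDeriv, hlin, hderiv.deriv]

end Sigma

theorem stmt9_general (n k : ℕ) (hk : 1 ≤ k) (lam : Fin n → ℝ)
    (hΓ : ∀ l, 1 ≤ l → l ≤ k → 0 ≤ sigmaMat n l (Matrix.diagonal lam))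
    (M : Matrix (Fin n) (Fin n) ℝ)
    (hM : ∀ i j, M i j = sigmaDeriv n k (Matrix.diagonal lam) i j) :
    M.PosSemidef ∧ (∀ i j, i ≠ j → M i j = 0) ∧
      (∀ i, M i i = ∑ s ∈ (Finset.univ.erase i).powersetCard (k - 1), ∏ l ∈ s, lam l) ∧
      ∀ i, 0 ≤ M i i := by
  obtain ⟨k, rfl⟩ : ∃ k', k = k' + 1 := ⟨k - 1, by omega⟩
  have hoff : ∀ i j, i ≠ j → M i j = 0 := fun i j hij =>
    (hM i j).trans (sigmaDeriv_diagonal_of_ne lam hij)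
  have hdiag : ∀ i, M i i = ((Finset.univ.erase i).val.map lam).esymm k := fun i =>
    (hM i i).trans (sigmaDeriv_diagonal_self lam i)
  have hnonneg : ∀ i, 0 ≤ M i i := fun i => by
    rw [hdiag i]
    refine Multiset.esymm_nonneg_of_esymm_cons_nonneg (a := lam i) fun l hl => ?_
    rcases l with _ | l
    · simp
    rw [← Finset.map_univ_val_eq_cons, ← sigmaMat_diagonal]
    exact hΓ (l + 1) (by omega) hl
  have hM_diag : M = diagonal fun i => M i i := by
    ext i j
    rcases eq_or_ne i j with rfl | hij
    · simp
    · rw [hoff i j hij, diagonal_apply_ne _ hij]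
  refine ⟨hM_diag ▸ posSemidef_diagonal_iff.2 hnonneg, hoff, fun i => ?_, hnonneg⟩
  rw [hdiag i, Finset.esymm_map_val, Nat.add_sub_cancel]

/-- if `λ ∈ Γ_k` and `D = diag(λ)`, then the matrix `(∂σ_k/∂a_{ij})(D)` is
positive semidefinite: it is diagonal with entries `σ_{k−1}(λ|i) ≥ 0`. -/
theorem stmt9 (n k : ℕ) (hk : 1 ≤ k) (hkn : k ≤ n) (lam : Fin n → ℝ)
    (hΓ : ∀ l, 1 ≤ l → l ≤ k → 0 ≤ sigmaMat n l (Matrix.diagonal lam))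
    (M : Matrix (Fin n) (Fin n) ℝ)
    (hM : ∀ i j, M i j = sigmaDeriv n k (Matrix.diagonal lam) i j) :
    M.PosSemidef ∧ (∀ i j, i ≠ j → M i j = 0) ∧
      (∀ i, M i i = ∑ s ∈ (Finset.univ.erase i).powersetCard (k - 1), ∏ l ∈ s, lam l) ∧
      ∀ i, 0 ≤ M i i :=
  stmt9_general n k hk lam hΓ M hM
end

section
/- Let u ∈ C¹(Ω) on an open set Ω ⊆ ℝⁿ with |Du|^{p−2}Du ∈ C¹(Ω), p > 1, and let x₀ ∈ Ω with Du(x₀) ≠ 0. Then u is twice differentiable at x₀; more precisely, D²u(x₀) = B(x₀)^{−1} · D(|Du|^{p−2}Du)(x₀), where B_{ij} = |Du|^{p−2}(δ_{ij} + (p−2) u_i u_j/|Du|²). -/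
/-! If `φ(y) = ‖y‖^(p-2) y`, then `V = φ ∘ Du`. The map `φ` is inverted by
`y ↦ ‖y‖^(1/(p-1) - 1) y`, which is smooth away from `0`; so `Du` is this inverse composed with the
`C¹` field `V`, hence differentiable at `x₀` since `V(x₀) ≠ 0`. The chain rule then gives
`DV(x₀) = Dφ(Du(x₀)) · D²u(x₀)`, where `Dφ(Du(x₀))` is the matrix `B`, and differentiating
`φ⁻¹ ∘ φ = id` shows that `B` is invertible. -/

open Real

section RadialPow

variable {E : Type*} [NormedAddCommGroup E]

section NormedSpace

variable [NormedSpace ℝ E]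

noncomputable def radialPow (q : ℝ) (y : E) : E := ‖y‖ ^ q • y

theorem norm_radialPow (q : ℝ) {y : E} (hy : y ≠ 0) :
    ‖radialPow q y‖ = ‖y‖ ^ (q + 1) := by
  have hy' : 0 < ‖y‖ := norm_pos_iff.mpr hy
  rw [radialPow, norm_smul, norm_of_nonneg (rpow_nonneg hy'.le _), rpow_add_one hy'.ne']

theorem radialPow_comp_radialPow (a b : ℝ) :
    radialPow b ∘ radialPow a = radialPow (E := E) ((a + 1) * (b + 1) - 1) := by
  funext y
  rcases eq_or_ne y 0 with rfl | hy
  · simp [radialPow]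
  have hy' : 0 < ‖y‖ := norm_pos_iff.mpr hy
  rw [Function.comp_apply, radialPow, norm_radialPow a hy, radialPow, smul_smul,
    ← rpow_mul hy'.le, ← rpow_add hy', radialPow]
  ring_nf

theorem radialPow_leftInverse {a b : ℝ} (hab : (a + 1) * (b + 1) = 1) :
    Function.LeftInverse (radialPow (E := E) b) (radialPow a) := by
  intro y
  rw [← Function.comp_apply (f := radialPow b), radialPow_comp_radialPow, hab, sub_self]
  simp [radialPow]

theorem radialPow_ne_zero (q : ℝ) {y : E} (hy : y ≠ 0) : radialPow q y ≠ 0 :=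
  norm_pos_iff.mp (norm_radialPow q hy ▸ rpow_pos_of_pos (norm_pos_iff.mpr hy) _)

end NormedSpace

section InnerProductSpace

variable [InnerProductSpace ℝ E]

theorem hasFDerivAt_norm_rpow_of_ne_zero (q : ℝ) {y : E} (hy : y ≠ 0) :
    HasFDerivAt (fun z : E => ‖z‖ ^ q) ((q * ‖y‖ ^ (q - 2)) • innerSL ℝ y) y := by
  have hnorm_sq_rpow (z : E) : (‖z‖ ^ 2) ^ (q / 2) = ‖z‖ ^ q := by
    rw [← rpow_natCast, ← rpow_mul (norm_nonneg z)]
    ring_nf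
  have := (hasStrictFDerivAt_norm_sq y).hasFDerivAt.rpow_const (p := q / 2)
    (Or.inl (by positivity))
  simp only [hnorm_sq_rpow] at this
  convert this using 1
  ext v
  rw [← rpow_natCast, ← rpow_mul (norm_nonneg y)]
  simp only [smul_apply, smul_eq_mul, two_smul, add_apply]
  ring_nf

theorem hasFDerivAt_radialPow (q : ℝ) {y : E} (hy : y ≠ 0) :
    HasFDerivAt (radialPow q)
      (‖y‖ ^ q • ContinuousLinearMap.id ℝ E +
        ((q * ‖y‖ ^ (q - 2)) • innerSL ℝ y).smulRight y) y :=
  (hasFDerivAt_norm_rpow_of_ne_zero q hy).smul (hasFDerivAt_id y)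

theorem fderiv_radialPow_comp_fderiv_radialPow {a b : ℝ}
    (hab : (a + 1) * (b + 1) = 1) {y : E} (hy : y ≠ 0) :
    (fderiv ℝ (radialPow b) (radialPow a y)).comp (fderiv ℝ (radialPow a) y) =
      ContinuousLinearMap.id ℝ E := by
  have hcomp := (hasFDerivAt_radialPow b (radialPow_ne_zero a hy)).fderiv ▸
    (hasFDerivAt_radialPow b (radialPow_ne_zero a hy)).comp y
      (hasFDerivAt_radialPow a hy).differentiableAt.hasFDerivAt
  rw [(radialPow_leftInverse hab).comp_eq_id] at hcomp
  exact hcomp.unique (hasFDerivAt_id y)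

end InnerProductSpace

end RadialPow

theorem Matrix.toEuclideanCLM_symm_apply {𝕜 ι : Type*} [RCLike 𝕜] [Fintype ι] [DecidableEq ι]
    (L : EuclideanSpace 𝕜 ι →L[𝕜] EuclideanSpace 𝕜 ι) (i j : ι) :
    (Matrix.toEuclideanCLM (𝕜 := 𝕜) (n := ι)).symm L i j =
      L (EuclideanSpace.single j 1) i := by
  obtain ⟨M, rfl⟩ : ∃ M, Matrix.toEuclideanCLM (𝕜 := 𝕜) (n := ι) M = L :=
    ⟨_, StarAlgEquiv.apply_symm_apply _ L⟩
  rw [StarAlgEquiv.symm_apply_apply, Matrix.ofLp_toEuclideanCLM]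
  simp

theorem toEuclideanCLM_symm_fderiv_radialPow {ι : Type*} [Fintype ι] [DecidableEq ι] (q : ℝ)
    {y : EuclideanSpace ℝ ι} (hy : y ≠ 0) :
    (Matrix.toEuclideanCLM (𝕜 := ℝ) (n := ι)).symm (fderiv ℝ (radialPow q) y) =
      Matrix.of fun i j =>
        ‖y‖ ^ q * ((if i = j then (1 : ℝ) else 0) + q * y i * y j / ‖y‖ ^ 2) := by
  have hy' : 0 < ‖y‖ := norm_pos_iff.mpr hy
  ext i j
  rw [Matrix.toEuclideanCLM_symm_apply, (hasFDerivAt_radialPow q hy).fderiv,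
    rpow_sub hy', rpow_two]
  simp only [add_apply, smul_apply, ContinuousLinearMap.smulRight_apply,
    ContinuousLinearMap.id_apply, innerSL_apply_apply, EuclideanSpace.inner_single_right,
    PiLp.add_apply, PiLp.smul_apply, PiLp.single_apply, smul_eq_mul, conj_trivial, Matrix.of_apply]
  split_ifs <;> ring

theorem stmt15_general (n : ℕ) (p : ℝ) (hp : 1 < p)
    (Ω : Set (EuclideanSpace ℝ (Fin n))) (hΩ : IsOpen Ω)
    (u : EuclideanSpace ℝ (Fin n) → ℝ)
    (V : EuclideanSpace ℝ (Fin n) → EuclideanSpace ℝ (Fin n))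
    (hV : ∀ x, V x = ‖gradient u x‖ ^ (p - 2) • gradient u x)
    (hV1 : ContDiffOn ℝ 1 V Ω)
    (x₀ : EuclideanSpace ℝ (Fin n)) (hx₀ : x₀ ∈ Ω) (h0 : gradient u x₀ ≠ 0)
    (B : Matrix (Fin n) (Fin n) ℝ)
    (hB : ∀ i j, B i j = ‖gradient u x₀‖ ^ (p - 2) *
      ((if i = j then (1 : ℝ) else 0) +
        (p - 2) * gradient u x₀ i * gradient u x₀ j / ‖gradient u x₀‖ ^ 2)) :
    DifferentiableAt ℝ (gradient u) x₀ ∧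
      (Matrix.of fun i j => fderiv ℝ (gradient u) x₀ (EuclideanSpace.single j 1) i) =
        B⁻¹ * Matrix.of fun i j => fderiv ℝ V x₀ (EuclideanSpace.single j 1) i := by
  set J := (Matrix.toEuclideanCLM (𝕜 := ℝ) (n := Fin n)).symm
  have hJ (L : EuclideanSpace ℝ (Fin n) →L[ℝ] EuclideanSpace ℝ (Fin n)) :
      (Matrix.of fun i j => L (EuclideanSpace.single j 1) i) = J L := by
    ext i j
    rw [Matrix.toEuclideanCLM_symm_apply, Matrix.of_apply]
  have hexponents : (p - 2 + 1) * ((p - 1)⁻¹ - 1 + 1) = 1 := by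
    have : p - 1 ≠ 0 := by linarith
    field_simp
    ring
  have hV_eq : V = radialPow (p - 2) ∘ gradient u := funext hV
  have hV_ne : V x₀ ≠ 0 := hV_eq ▸ radialPow_ne_zero _ h0
  have hgrad_eq : gradient u = radialPow ((p - 1)⁻¹ - 1) ∘ V := by
    rw [hV_eq, ← Function.comp_assoc, (radialPow_leftInverse hexponents).comp_eq_id, Function.id_comp]
  have hgrad : HasFDerivAt (gradient u)
      ((fderiv ℝ (radialPow ((p - 1)⁻¹ - 1)) (V x₀)).comp (fderiv ℝ V x₀)) x₀ :=
    hgrad_eq ▸ (hasFDerivAt_radialPow _ hV_ne).differentiableAt.hasFDerivAt.comp x₀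
      ((hV1.contDiffAt (hΩ.mem_nhds hx₀)).differentiableAt one_ne_zero).hasFDerivAt
  refine ⟨hgrad.differentiableAt, ?_⟩
  have hB_eq : B = J (fderiv ℝ (radialPow (p - 2)) (gradient u x₀)) := by
    ext i j
    rw [hB, toEuclideanCLM_symm_fderiv_radialPow _ h0, Matrix.of_apply]
  have hB_inv : B⁻¹ = J (fderiv ℝ (radialPow ((p - 1)⁻¹ - 1)) (V x₀)) := by
    refine Matrix.inv_eq_left_inv ?_
    rw [hB_eq, ← map_mul, hV_eq, Function.comp_apply, ContinuousLinearMap.mul_def,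
      fderiv_radialPow_comp_fderiv_radialPow hexponents h0, ← ContinuousLinearMap.one_def, map_one]
  rw [hJ, hJ, hgrad.fderiv, hB_inv, ← map_mul]
  rfl

/-- if `u ∈ C¹(Ω)` with `|Du|^{p−2}Du ∈ C¹(Ω)` and `Du(x₀) ≠ 0`, then `u` is
twice differentiable at `x₀` and `D²u(x₀) = B(x₀)⁻¹ · D(|Du|^{p−2}Du)(x₀)`, where
`B_{ij} = |Du|^{p−2}(δ_{ij} + (p−2) u_i u_j/|Du|²)`. -/
theorem stmt15 (n : ℕ) (p : ℝ) (hp : 1 < p)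
    (Ω : Set (EuclideanSpace ℝ (Fin n))) (hΩ : IsOpen Ω)
    (u : EuclideanSpace ℝ (Fin n) → ℝ) (hu : ContDiffOn ℝ 1 u Ω)
    (V : EuclideanSpace ℝ (Fin n) → EuclideanSpace ℝ (Fin n))
    (hV : ∀ x, V x = ‖gradient u x‖ ^ (p - 2) • gradient u x)
    (hV1 : ContDiffOn ℝ 1 V Ω)
    (x₀ : EuclideanSpace ℝ (Fin n)) (hx₀ : x₀ ∈ Ω) (h0 : gradient u x₀ ≠ 0)
    (B : Matrix (Fin n) (Fin n) ℝ)
    (hB : ∀ i j, B i j = ‖gradient u x₀‖ ^ (p - 2) *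
      ((if i = j then (1 : ℝ) else 0) +
        (p - 2) * gradient u x₀ i * gradient u x₀ j / ‖gradient u x₀‖ ^ 2)) :
    DifferentiableAt ℝ (gradient u) x₀ ∧
      (Matrix.of fun i j => fderiv ℝ (gradient u) x₀ (EuclideanSpace.single j 1) i) =
        B⁻¹ * Matrix.of fun i j => fderiv ℝ V x₀ (EuclideanSpace.single j 1) i :=
  stmt15_general n p hp Ω hΩ u V hV hV1 x₀ hx₀ h0 B hB
end
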